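/- Let r ≥ 3, n ≥ 2r, and let X = {i} with r + 2 ≤ i ≤ n be a singleton. Then for n sufficiently large, every left-compressed intersecting family 𝒜 ⊆ [n]^(r) satisfies |𝒜({i})| ≤ |𝒮({i})| = C(n−2, r−2), where 𝒮 is the star at 1. -/

import Mathlib

open Finset

/-- The ij-compression of a finite set: replace j by i if possible. -/
def comp (i j : ℕ) (A : Finset ℕ) : Finset ℕ :=
  if j ∈ A ∧ i ∉ A then insert i (A.erase j) else A

/-- The ij-compression of a family of sets. -/
def compFam (i j : ℕ) (𝒜 : Finset (Finset ℕ)) : Finset (Finset ℕ) :=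
  (𝒜.filter (fun A => comp i j A ∈ 𝒜)) ∪
    ((𝒜.filter (fun A => comp i j A ∉ 𝒜)).image (comp i j))

/-- A family is intersecting if any two members meet. -/
def IsIntersecting (𝒜 : Finset (Finset ℕ)) : Prop :=
  ∀ A ∈ 𝒜, ∀ B ∈ 𝒜, (A ∩ B).Nonempty

/-- A family is left-compressed if it is invariant under all ij-compressions, i < j. -/
def LeftCompressed (𝒜 : Finset (Finset ℕ)) : Prop :=
  ∀ i j : ℕ, 1 ≤ i → i < j → compFam i j 𝒜 = 𝒜

/-- The compression order: same size and the k-th smallest element of `A` is at most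
the k-th smallest element of `B`. -/
def domLE (A B : Finset ℕ) : Prop :=
  A.card = B.card ∧ ∀ (k : ℕ) (a b : ℕ), (A.sort (· ≤ ·))[k]? = some a →
    (B.sort (· ≤ ·))[k]? = some b → a ≤ b

/-- `A ≺ G` : `A` is generated by `G`, i.e. `|G| ≤ |A|` and the k-th smallest element
of `A` is at most the k-th smallest element of `G` for `k ≤ |G|`. -/
def prec (A G : Finset ℕ) : Prop :=
  G.card ≤ A.card ∧ ∀ (k : ℕ) (a g : ℕ), (A.sort (· ≤ ·))[k]? = some a →
    (G.sort (· ≤ ·))[k]? = some g → a ≤ g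

/-- The r-element subsets of [n] = {1, ..., n}. -/
def uniformOn (n r : ℕ) : Finset (Finset ℕ) := (Icc 1 n).powersetCard r

/-- The family ⟨𝒢⟩_r^n generated by 𝒢 under inclusion. -/
def genSub (r n : ℕ) (𝒢 : Finset (Finset ℕ)) : Finset (Finset ℕ) :=
  (uniformOn n r).filter (fun A => ∃ G ∈ 𝒢, G ⊆ A)

open Classical in
/-- The family ⟨𝒢⟩_r^n generated by 𝒢 under ≺. -/
noncomputable def genP (r n : ℕ) (𝒢 : Finset (Finset ℕ)) : Finset (Finset ℕ) :=
  (uniformOn n r).filter (fun A => ∃ G ∈ 𝒢, prec A G)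

/-- ℱ(X) : the members of ℱ meeting X. -/
def hitting (ℱ : Finset (Finset ℕ)) (X : Finset ℕ) : Finset (Finset ℕ) :=
  ℱ.filter (fun A => (A ∩ X).Nonempty)

/-- The star at 1 in [n]^(r). -/
def star (n r : ℕ) : Finset (Finset ℕ) := (uniformOn n r).filter (fun A => 1 ∈ A)

/-- A maximal left-compressed intersecting subfamily of [n]^(r). -/
def MaxLCI (n r : ℕ) (𝒜 : Finset (Finset ℕ)) : Prop :=
  𝒜 ⊆ uniformOn n r ∧ LeftCompressed 𝒜 ∧ IsIntersecting 𝒜 ∧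
    ∀ B ∈ uniformOn n r, B ∉ 𝒜 → ¬ IsIntersecting (insert B 𝒜)

/-- X is good for n and r. -/
def IsGood (n r : ℕ) (X : Finset ℕ) : Prop :=
  ∀ 𝒜 ⊆ uniformOn n r, LeftCompressed 𝒜 → IsIntersecting 𝒜 →
    (hitting 𝒜 X).card ≤ (hitting (star n r) X).card


/-!
Split the members of `𝒜` containing `i` according to whether they contain `1`. Those that do
lie in `𝒮({i})`, which has `C(n-2, r-2)` members. If some `A₀ ∈ 𝒜` contains `i` but not `1`,
pick `x < i` outside `A₀` (possible since `i ≥ r + 2`): no set `{1, i} ∪ R` with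
`R ⊆ (i, n] \ A₀` can lie in `𝒜`, because compressing `i` to `x` would give a member disjoint
from `A₀`. This leaves at least `C(n-i-r, r-2)` sets of `𝒮({i})` outside `𝒜`.
On the other hand every member `A` of a left-compressed intersecting family has more than `t/2`
elements in `[1, t]` for some `t` (otherwise `A` could be shifted both to the odd and to the even
numbers of `[1, 2r]`), so a member avoiding `1` contains two points of `[2, 2r-1]` besides `i`.
There are only `O(n^(r-3))` such sets, fewer than `C(n-i-r, r-2)` once `n` is large.
-/

/-- For `#A = #B`, `countLE A ≤ countLE B` pointwise says that `B` arises from `A` by moving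
elements to the left (the shifting order `domLE B A`, phrased through counting functions). -/
def countLE (A : Finset ℕ) (t : ℕ) : ℕ := #{x ∈ A | x ≤ t}

lemma countLE_mono {A B : Finset ℕ} (h : A ⊆ B) (t : ℕ) : countLE A t ≤ countLE B t :=
  card_le_card (filter_subset_filter _ h)

lemma countLE_le_card (A : Finset ℕ) (t : ℕ) : countLE A t ≤ #A :=
  card_le_card (filter_subset _ _)

lemma countLE_insert_le (A : Finset ℕ) (b t : ℕ) : countLE (insert b A) t ≤ countLE A t + 1 := by
  unfold countLE
  rw [filter_insert]
  split_ifs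
  · exact card_insert_le _ _
  · omega

lemma countLE_erase_add_one {A : Finset ℕ} {a t : ℕ} (ha : a ∈ A) (hat : a ≤ t) :
    countLE (A.erase a) t + 1 = countLE A t := by
  unfold countLE
  rw [filter_erase]
  exact card_erase_add_one (mem_filter.2 ⟨ha, hat⟩)

lemma countLE_lt_countLE {A B : Finset ℕ} {b t : ℕ} (hAB : ∀ x ∈ A, x ≤ t → x ∈ B)
    (hbB : b ∈ B) (hbA : b ∉ A) (hbt : b ≤ t) : countLE A t < countLE B t := by
  refine card_lt_card ((ssubset_iff_of_subset ?_).2 ⟨b, mem_filter.2 ⟨hbB, hbt⟩, ?_⟩)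
  · intro x hx
    obtain ⟨hxA, hxt⟩ := mem_filter.1 hx
    exact mem_filter.2 ⟨hAB x hxA hxt, hxt⟩
  · exact fun hb => hbA (mem_filter.1 hb).1

lemma LeftCompressed.comp_mem {𝒜 : Finset (Finset ℕ)} (h𝒜 : LeftCompressed 𝒜)
    {A : Finset ℕ} (hA : A ∈ 𝒜) {i j : ℕ} (hi : 1 ≤ i) (hij : i < j) : comp i j A ∈ 𝒜 := by
  by_contra h
  have hmem : comp i j A ∈ compFam i j 𝒜 :=
    mem_union_right _ (mem_image_of_mem _ (mem_filter.2 ⟨hA, h⟩))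
  rw [h𝒜 i j hi hij] at hmem
  exact h hmem

theorem LeftCompressed.mem_of_countLE_le {𝒜 : Finset (Finset ℕ)} (h𝒜 : LeftCompressed 𝒜)
    {A B : Finset ℕ} (hA : A ∈ 𝒜) (hB : 0 ∉ B) (hcard : #A = #B)
    (hle : ∀ t, countLE A t ≤ countLE B t) : B ∈ 𝒜 := by
  induction hk : #(A \ B) using Nat.strong_induction_on generalizing A with
  | _ k ih =>
  obtain rfl | hne := eq_or_ne A B
  · exact hA
  have hAB : (A \ B).Nonempty :=
    sdiff_nonempty.2 fun hsub => hne (eq_of_subset_of_card_le hsub hcard.ge)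
  have hBA : (B \ A).Nonempty :=
    sdiff_nonempty.2 fun hsub => hne (eq_of_subset_of_card_le hsub hcard.le).symm
  obtain ⟨a, ha, ha_min⟩ : ∃ a ∈ A \ B, ∀ x ∈ A \ B, a ≤ x :=
    ⟨_, min'_mem _ hAB, fun x hx => min'_le _ x hx⟩
  obtain ⟨b, hb, hb_min⟩ : ∃ b ∈ B \ A, ∀ x ∈ B \ A, b ≤ x :=
    ⟨_, min'_mem _ hBA, fun x hx => min'_le _ x hx⟩
  obtain ⟨haA, haB⟩ := mem_sdiff.1 ha
  obtain ⟨hbB, hbA⟩ := mem_sdiff.1 hb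
  have hA_sub_B : ∀ x ∈ A, x < a → x ∈ B := fun x hx hxa =>
    by_contra fun hxB => (ha_min x (mem_sdiff.2 ⟨hx, hxB⟩)).not_gt hxa
  -- Domination forces the first new element of `B` to lie left of the first lost one of `A`.
  have hba : b < a := by
    by_contra! hab
    refine (hle a).not_gt (countLE_lt_countLE (fun x hx hxa => ?_) haA haB le_rfl)
    by_contra hxA
    have := hb_min x (mem_sdiff.2 ⟨hx, hxA⟩)
    have hxa : x = a := by omega
    exact haB (hxa ▸ hx)
  have hcomp : comp b a A = insert b (A.erase a) := if_pos ⟨haA, hbA⟩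
  have hbA' : b ∉ A.erase a := fun h => hbA (mem_of_mem_erase h)
  refine ih _ ?_ (h𝒜.comp_mem hA ?_ hba) ?_ ?_ rfl
  · rw [← hk, hcomp, insert_sdiff_of_mem _ hbB, erase_sdiff_comm]
    exact card_erase_lt_of_mem (mem_sdiff.2 ⟨haA, haB⟩)
  · exact Nat.one_le_iff_ne_zero.2 fun hb0 => hB (hb0 ▸ hbB)
  · rw [hcomp, card_insert_of_notMem hbA', card_erase_add_one haA, hcard]
  · intro t
    rw [hcomp]
    have hins := countLE_insert_le (A.erase a) b t
    rcases lt_or_ge t b with htb | hbt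
    · have : countLE (insert b (A.erase a)) t = countLE (A.erase a) t := by
        unfold countLE
        rw [filter_insert, if_neg (by omega)]
      rw [this]
      exact (countLE_mono (erase_subset a A) t).trans (hle t)
    rcases lt_or_ge t a with hta | hat
    · have := countLE_mono (erase_subset a A) t
      have := countLE_lt_countLE (fun x hx hxt => hA_sub_B x hx (by omega)) hbB hbA hbt
      omega
    · have := countLE_erase_add_one haA hat
      have := hle t
      omega

lemma min_le_countLE_image_two_mul_add (r c t : ℕ) (hc : c ≤ 2) :
    min r (t / 2) ≤ countLE ((range r).image fun k => 2 * k + c) t := by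
  have hinj : Function.Injective fun k : ℕ => 2 * k + c := fun k l h => by simp at h; omega
  calc min r (t / 2) = #((range (min r (t / 2))).image fun k => 2 * k + c) := by
        rw [card_image_of_injective _ hinj, card_range]
    _ ≤ countLE ((range r).image fun k => 2 * k + c) t := by
        refine card_le_card fun y hy => ?_
        obtain ⟨k, hk, rfl⟩ := mem_image.1 hy
        rw [mem_range] at hk
        exact mem_filter.2 ⟨mem_image_of_mem _ (mem_range.2 (by omega)), by omega⟩

theorem LeftCompressed.exists_lt_two_mul_countLE {𝒜 : Finset (Finset ℕ)}
    (h𝒜 : LeftCompressed 𝒜) (hI : IsIntersecting 𝒜) {A : Finset ℕ} (hA : A ∈ 𝒜) :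
    ∃ t, t < 2 * countLE A t := by
  by_contra! hA_sparse
  -- Otherwise both `{1, 3, 5, …}` and `{2, 4, 6, …}` (of size `#A`) dominate `A`.
  have hmem : ∀ c, 1 ≤ c → c ≤ 2 → (range #A).image (fun k => 2 * k + c) ∈ 𝒜 := by
    intro c hc1 hc2
    refine h𝒜.mem_of_countLE_le hA (by simp; omega) ?_ fun t => ?_
    · rw [card_image_of_injective _ fun k l h => by simp at h; omega, card_range]
    · refine le_trans ?_ (min_le_countLE_image_two_mul_add _ c t hc2)
      have := hA_sparse t
      exact le_min (countLE_le_card A t) (by omega)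
  obtain ⟨x, hx⟩ := hI _ (hmem 1 le_rfl one_le_two) _ (hmem 2 one_le_two le_rfl)
  simp only [mem_inter, mem_image] at hx
  omega

theorem LeftCompressed.two_le_card_inter_Icc_erase {𝒜 : Finset (Finset ℕ)}
    (h𝒜 : LeftCompressed 𝒜) (hI : IsIntersecting 𝒜) {A : Finset ℕ} (hA : A ∈ 𝒜)
    (hA₂ : ∀ x ∈ A, 2 ≤ x) {i : ℕ} (hi : 4 ≤ i) :
    2 ≤ #((A ∩ Icc 2 (2 * #A - 1)).erase i) := by
  obtain ⟨t, ht⟩ := h𝒜.exists_lt_two_mul_countLE hI hA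
  set P := {x ∈ A | x ≤ t}
  change t < 2 * #P at ht
  have hP_le_card : #P ≤ #A := countLE_le_card A t
  have hP_le_t : #P + 1 ≤ t := by
    have : P ⊆ Icc 2 t := fun x hx => by
      obtain ⟨hxA, hxt⟩ := mem_filter.1 hx
      exact mem_Icc.2 ⟨hA₂ x hxA, hxt⟩
    have := card_le_card this
    simp only [Nat.card_Icc] at this
    omega
  have hP_sub : P.erase i ⊆ (A ∩ Icc 2 (2 * #A - 1)).erase i := by
    refine erase_subset_erase _ fun x hx => ?_
    obtain ⟨hxA, hxt⟩ := mem_filter.1 hx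
    exact mem_inter.2 ⟨hxA, mem_Icc.2 ⟨hA₂ x hxA, by omega⟩⟩
  refine le_trans ?_ (card_le_card hP_sub)
  by_cases hiP : i ∈ P
  · have := card_erase_add_one hiP
    have := (mem_filter.1 hiP).2
    omega
  · rw [erase_eq_of_notMem hiP]
    omega

section SupersetCount

variable {α : Type*} [DecidableEq α]

lemma filter_superset_powersetCard {S V : Finset α} {r : ℕ} (hSV : S ⊆ V) (hr : #S ≤ r) :
    {A ∈ V.powersetCard r | S ⊆ A} = ((V \ S).powersetCard (r - #S)).image (S ∪ ·) := by
  ext A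
  simp only [mem_filter, mem_powersetCard, mem_image]
  constructor
  · rintro ⟨⟨hAV, hAr⟩, hSA⟩
    refine ⟨A \ S, ⟨sdiff_subset_sdiff hAV le_rfl, ?_⟩, union_sdiff_of_subset hSA⟩
    rw [card_sdiff_of_subset hSA, hAr]
  · rintro ⟨R, ⟨hRV, hRr⟩, rfl⟩
    have hSR : Disjoint S R := disjoint_of_subset_right hRV disjoint_sdiff
    refine ⟨⟨union_subset hSV (hRV.trans sdiff_subset), ?_⟩, subset_union_left⟩
    rw [card_union_of_disjoint hSR, hRr]
    omega

lemma card_image_union_powersetCard {S U : Finset α} (hSU : Disjoint S U) (k : ℕ) :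
    #((U.powersetCard k).image (S ∪ ·)) = (#U).choose k := by
  rw [card_image_of_injOn, card_powersetCard]
  intro R hR R' hR' hRR'
  rw [mem_coe, mem_powersetCard] at hR hR'
  rw [← union_sdiff_cancel_left (disjoint_of_subset_right hR.1 hSU),
    ← union_sdiff_cancel_left (disjoint_of_subset_right hR'.1 hSU)]
  exact congrArg (· \ S) hRR'

lemma card_filter_superset_powersetCard {S V : Finset α} {r : ℕ} (hSV : S ⊆ V) (hr : #S ≤ r) :
    #{A ∈ V.powersetCard r | S ⊆ A} = (#V - #S).choose (r - #S) := by
  rw [filter_superset_powersetCard hSV hr, card_image_union_powersetCard disjoint_sdiff,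
    card_sdiff_of_subset hSV]

end SupersetCount

lemma choose_add_le_two_pow_mul_choose {m k : ℕ} (hk : 2 * k ≤ m) (d : ℕ) :
    (m + d).choose k ≤ 2 ^ d * m.choose k := by
  induction d with
  | zero => simp
  | succ d ih =>
    obtain _ | k := k
    · simp [Nat.one_le_two_pow]
    calc (m + (d + 1)).choose (k + 1) = (m + d).choose k + (m + d).choose (k + 1) :=
          Nat.choose_succ_succ _ _
      _ ≤ 2 * (m + d).choose (k + 1) := by
          have := Nat.choose_le_succ_of_lt_half_left (r := k) (n := m + d) (by omega)
          omega
      _ ≤ 2 ^ (d + 1) * m.choose (k + 1) := by rw [pow_succ]; linarith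

lemma exists_mul_choose_le_choose_sub (c d k : ℕ) :
    ∃ N, ∀ n ≥ N, c * n.choose k ≤ (n - d).choose (k + 1) := by
  refine ⟨d + 2 * k + c * 2 ^ d * (k + 1), fun n hn => ?_⟩
  obtain ⟨m, rfl⟩ : ∃ m, n = m + d := ⟨n - d, by omega⟩
  rw [Nat.add_sub_cancel]
  have hrec := Nat.choose_succ_right_eq m k
  have hdouble := choose_add_le_two_pow_mul_choose (m := m) (k := k) (by omega) d
  have hm : c * 2 ^ d * (k + 1) ≤ m - k := by omega
  refine Nat.le_of_mul_le_mul_right (c := k + 1) ?_ k.succ_pos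
  calc c * (m + d).choose k * (k + 1) ≤ c * (2 ^ d * m.choose k) * (k + 1) := by gcongr
    _ = c * 2 ^ d * (k + 1) * m.choose k := by ring
    _ ≤ (m - k) * m.choose k := by gcongr
    _ = m.choose (k + 1) * (k + 1) := by rw [hrec, mul_comm]

lemma hitting_singleton (ℱ : Finset (Finset ℕ)) (i : ℕ) : hitting ℱ {i} = {A ∈ ℱ | i ∈ A} :=
  filter_congr fun A _ => by
    rw [← not_disjoint_iff_nonempty_inter, disjoint_singleton_right, not_not]

lemma hitting_star_singleton (n r i : ℕ) :
    hitting (star n r) {i} = {A ∈ uniformOn n r | {1, i} ⊆ A} := by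
  rw [hitting_singleton, _root_.star, filter_filter]
  exact filter_congr fun A _ => by rw [insert_subset_iff, singleton_subset_iff]

lemma card_filter_pair_subset_uniformOn {n r i : ℕ} (hr : 2 ≤ r) (hi : 2 ≤ i) (hin : i ≤ n) :
    #{A ∈ uniformOn n r | {1, i} ⊆ A} = (n - 2).choose (r - 2) := by
  have hpair : #({1, i} : Finset ℕ) = 2 := card_pair (by omega)
  rw [uniformOn, card_filter_superset_powersetCard _ (by omega), hpair, Nat.card_Icc,
    Nat.add_sub_cancel]
  intro x hx
  simp only [mem_insert, mem_singleton] at hx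
  exact mem_Icc.2 (by omega)

section IntersectingFamily

variable {n r i : ℕ} {𝒜 : Finset (Finset ℕ)}

theorem card_filter_pair_subset_add_choose_le (h𝒜 : 𝒜 ⊆ uniformOn n r) (hLC : LeftCompressed 𝒜)
    (hI : IsIntersecting 𝒜) (hr : 2 ≤ r) (hi : r + 2 ≤ i) (hin : i ≤ n) {A₀ : Finset ℕ}
    (hA₀ : A₀ ∈ 𝒜) (h1A₀ : 1 ∉ A₀) (hiA₀ : i ∈ A₀) :
    #{A ∈ 𝒜 | {1, i} ⊆ A} + (n - i - r).choose (r - 2) ≤ (n - 2).choose (r - 2) := by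
  have hA₀card : #A₀ = r := (mem_powersetCard.1 (h𝒜 hA₀)).2
  obtain ⟨x, hx⟩ : (Icc 2 i \ A₀).Nonempty := by
    rw [← card_pos]
    have := le_card_sdiff A₀ (Icc 2 i)
    rw [Nat.card_Icc] at this
    omega
  obtain ⟨hx, hxA₀⟩ := mem_sdiff.1 hx
  have hx2i : 2 ≤ x ∧ x < i := by
    have := mem_Icc.1 hx
    have : x ≠ i := fun h => hxA₀ (h ▸ hiA₀)
    omega
  set U := Ioc i n \ A₀
  set W := (U.powersetCard (r - 2)).image (({1, i} : Finset ℕ) ∪ ·)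
  have hW_sub : W ⊆ {A ∈ uniformOn n r | {1, i} ⊆ A} := by
    have hpair : #({1, i} : Finset ℕ) = 2 := card_pair (by omega)
    rw [uniformOn, filter_superset_powersetCard _ (by omega), hpair]
    · refine image_subset_image (powersetCard_mono fun y hy => ?_)
      obtain ⟨hy, -⟩ := mem_sdiff.1 hy
      have := mem_Ioc.1 hy
      simp only [mem_sdiff, mem_Icc, mem_insert, mem_singleton]
      omega
    · intro y hy
      simp only [mem_insert, mem_singleton] at hy
      exact mem_Icc.2 (by omega)
  have hW_disj : Disjoint {A ∈ 𝒜 | {1, i} ⊆ A} W := by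
    refine disjoint_left.2 fun D hD hDW => ?_
    obtain ⟨R, hR, rfl⟩ := mem_image.1 hDW
    have hRU := (mem_powersetCard.1 hR).1
    have hxD : x ∉ {1, i} ∪ R := by
      simp only [mem_union, mem_insert, mem_singleton, not_or]
      refine ⟨⟨by omega, by omega⟩, fun hxR => ?_⟩
      have := mem_Ioc.1 (mem_sdiff.1 (hRU hxR)).1
      omega
    have hcomp := hLC.comp_mem (mem_filter.1 hD).1 (i := x) (j := i) (by omega) hx2i.2
    rw [comp, if_pos ⟨by simp, hxD⟩] at hcomp
    obtain ⟨y, hy⟩ := hI _ hcomp _ hA₀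
    simp only [mem_inter, mem_insert, mem_erase, mem_union, mem_singleton] at hy
    obtain ⟨rfl | ⟨hyi, (rfl | rfl) | hyR⟩, hyA₀⟩ := hy
    · exact hxA₀ hyA₀
    · exact h1A₀ hyA₀
    · exact hyi rfl
    · exact (mem_sdiff.1 (hRU hyR)).2 hyA₀
  have hW_card : (n - i - r).choose (r - 2) ≤ #W := by
    rw [card_image_union_powersetCard]
    · refine Nat.choose_le_choose _ ?_
      have : #(Ioc i n) - #A₀ ≤ #U := le_card_sdiff A₀ (Ioc i n)
      rw [Nat.card_Ioc] at this
      omega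
    · refine disjoint_left.2 fun y hy hyU => ?_
      have := mem_Ioc.1 (mem_sdiff.1 hyU).1
      simp only [mem_insert, mem_singleton] at hy
      omega
  rw [← card_filter_pair_subset_uniformOn hr (by omega) hin]
  calc #{A ∈ 𝒜 | {1, i} ⊆ A} + (n - i - r).choose (r - 2)
      ≤ #({A ∈ 𝒜 | {1, i} ⊆ A} ∪ W) := by rw [card_union_of_disjoint hW_disj]; omega
    _ ≤ #{A ∈ uniformOn n r | {1, i} ⊆ A} :=
      card_le_card (union_subset (filter_subset_filter _ h𝒜) hW_sub)

theorem card_filter_mem_not_one_mem_le (h𝒜 : 𝒜 ⊆ uniformOn n r) (hLC : LeftCompressed 𝒜)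
    (hI : IsIntersecting 𝒜) (hr : 3 ≤ r) (hi : 4 ≤ i) (hin : i ≤ n) (hrn : 2 * r ≤ n) :
    #{A ∈ 𝒜 | i ∈ A ∧ 1 ∉ A} ≤ (2 * r).choose 2 * (n - 3).choose (r - 3) := by
  set s := (Icc 2 (2 * r - 1)).erase i
  have hcover : {A ∈ 𝒜 | i ∈ A ∧ 1 ∉ A} ⊆
      (s.powersetCard 2).biUnion fun S => {A ∈ uniformOn n r | insert i S ⊆ A} := by
    intro A hA
    obtain ⟨hA𝒜, hiA, h1A⟩ := mem_filter.1 hA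
    obtain ⟨hA_sub, hA_card⟩ := mem_powersetCard.1 (h𝒜 hA𝒜)
    have hA₂ : ∀ x ∈ A, 2 ≤ x := fun x hx => by
      have := mem_Icc.1 (hA_sub hx)
      have : x ≠ 1 := fun h => h1A (h ▸ hx)
      omega
    have h2 := hLC.two_le_card_inter_Icc_erase hI hA𝒜 hA₂ hi
    rw [hA_card] at h2
    obtain ⟨S, hS, hS_card⟩ := exists_subset_card_eq h2
    refine mem_biUnion.2 ⟨S, mem_powersetCard.2 ⟨?_, hS_card⟩, mem_filter.2 ⟨h𝒜 hA𝒜, ?_⟩⟩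
    · exact hS.trans (erase_subset_erase _ inter_subset_right)
    · exact insert_subset hiA (hS.trans ((erase_subset _ _).trans inter_subset_left))
  calc #{A ∈ 𝒜 | i ∈ A ∧ 1 ∉ A}
      ≤ #((s.powersetCard 2).biUnion fun S => {A ∈ uniformOn n r | insert i S ⊆ A}) :=
        card_le_card hcover
    _ ≤ #(s.powersetCard 2) * (n - 3).choose (r - 3) :=
        card_biUnion_le_card_mul _ _ _ fun S hS => ?_
    _ ≤ (2 * r).choose 2 * (n - 3).choose (r - 3) := by
        rw [card_powersetCard]
        refine Nat.mul_le_mul_right _ (Nat.choose_le_choose _ ?_)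
        exact card_erase_le.trans (by rw [Nat.card_Icc]; omega)
  obtain ⟨hSs, hS_card⟩ := mem_powersetCard.1 hS
  have hiS : i ∉ S := fun h => (mem_erase.1 (hSs h)).1 rfl
  have hS_card' : #(insert i S) = 3 := by rw [card_insert_of_notMem hiS, hS_card]
  rw [uniformOn, card_filter_superset_powersetCard _ (by omega), hS_card', Nat.card_Icc,
    Nat.add_sub_cancel]
  refine insert_subset (mem_Icc.2 (by omega)) fun y hy => ?_
  have := mem_Icc.1 (mem_of_mem_erase (hSs hy))
  exact mem_Icc.2 (by omega)

end IntersectingFamily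

theorem stmt19 (r i : ℕ) (hr : 3 ≤ r) (hi : r + 2 ≤ i) :
    ∃ N : ℕ, 2 * r ≤ N ∧ ∀ n : ℕ, N ≤ n → i ≤ n →
      (hitting (star n r) {i}).card = Nat.choose (n - 2) (r - 2) ∧
      ∀ 𝒜 : Finset (Finset ℕ), 𝒜 ⊆ uniformOn n r → LeftCompressed 𝒜 →
        IsIntersecting 𝒜 → (hitting 𝒜 {i}).card ≤ Nat.choose (n - 2) (r - 2) := by
  obtain ⟨N, hN⟩ := exists_mul_choose_le_choose_sub ((2 * r).choose 2) (i + r) (r - 3)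
  refine ⟨N + 2 * r, by omega, fun n hn hin => ?_⟩
  have hpair := card_filter_pair_subset_uniformOn (r := r) (by omega) (by omega) hin
  refine ⟨by rw [hitting_star_singleton, hpair], fun 𝒜 h𝒜 hLC hI => ?_⟩
  have hsplit : #(hitting 𝒜 {i}) = #{A ∈ 𝒜 | {1, i} ⊆ A} + #{A ∈ 𝒜 | i ∈ A ∧ 1 ∉ A} := by
    rw [hitting_singleton, ← card_filter_add_card_filter_not (fun A => 1 ∈ A), filter_filter,
      filter_filter]
    congr 2
    exact filter_congr fun A _ => by rw [insert_subset_iff, singleton_subset_iff, and_comm]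
  rw [hsplit]
  by_cases h : ∃ A₀ ∈ 𝒜, i ∈ A₀ ∧ 1 ∉ A₀
  · obtain ⟨A₀, hA₀, hiA₀, h1A₀⟩ := h
    have h₁ := card_filter_pair_subset_add_choose_le h𝒜 hLC hI (by omega) hi hin hA₀ h1A₀ hiA₀
    have h₂ := card_filter_mem_not_one_mem_le h𝒜 hLC hI hr (by omega) hin (by omega)
    have h₃ := hN n (by omega)
    rw [show r - 3 + 1 = r - 2 by omega, Nat.sub_add_eq] at h₃
    have := Nat.choose_le_choose (r - 3) (Nat.sub_le n 3)
    have := Nat.mul_le_mul_left ((2 * r).choose 2) this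
    omega
  · push Not at h
    have hempty : #{A ∈ 𝒜 | i ∈ A ∧ 1 ∉ A} = 0 :=
      card_eq_zero.2 (filter_false_of_mem fun A hA ⟨hiA, h1A⟩ => h1A (h A hA hiA))
    rw [hempty, add_zero, ← hpair]
    exact card_le_card (filter_subset_filter _ h𝒜)
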